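/- Let p1, p2 ∈ [0,1], λ1, λ2 ≥ 0, i1 ≥ 1 and i2 ∈ ℕ. Then the family (Δ1 · P(Δ1,Δ2 | (i1,i2))) indexed by (Δ1,Δ2) ∈ ℤ² is summable and Σ_{(Δ1,Δ2)∈ℤ²} Δ1 · P(Δ1,Δ2 | (i1,i2)) = λ1 − (1 − p1); that is, when the first queue is nonempty its expected one-slot change in length equals the arrival rate λ1 minus the channel success probability 1 − p1 (this drift underlies the stability condition λ1 < 1 − p1). -/

import Mathlib

/-- Probability that `x` packets arrive in `b` time slots under a Poisson
arrival process of rate `lam` per slot. -/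
noncomputable def arr (lam : ℝ) (b : ℕ) (x : ℤ) : ℝ :=
  if 0 ≤ x then Real.exp (-(lam * b)) * (lam * b) ^ x.toNat / (Nat.factorial x.toNat) else 0

/-- Probability of zero successful transmissions in one slot when the queue holds `i` packets. -/
noncomputable def d0 (i : ℕ) (p : ℝ) : ℝ := if i = 0 then 1 else p

/-- Probability of one successful transmission in one slot when the queue holds `i` packets. -/
noncomputable def d1 (i : ℕ) (p : ℝ) : ℝ := if i = 0 then 0 else 1 - p

/-- Genie-aided inter-session transition probability `P(Δ1, Δ2 | (i1, i2))`. -/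
noncomputable def Ptrans (p1 p2 lam1 lam2 : ℝ) (i1 i2 : ℕ) (Δ : ℤ × ℤ) : ℝ :=
  d0 i1 p1 * arr lam1 1 Δ.1 *
      (d0 i2 p2 * arr lam2 1 Δ.2 + d1 i2 p2 * arr lam2 1 (Δ.2 + 1)) +
    d1 i1 p1 * arr lam1 1 (Δ.1 + 1) *
      (d0 i2 p2 * arr lam2 1 (Δ.2 - 1) + d1 i2 p2 * arr lam2 1 Δ.2)

open scoped Nat

/-! When the first queue is nonempty, `P(Δ1, Δ2 | (i1, i2))` splits as
`p1 · a(λ1, Δ1) · q(Δ2) + (1 - p1) · a(λ1, Δ1 + 1) · q(Δ2 - 1)`, where `q` is the law of the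
one-slot change of the second queue, a probability mass function on `ℤ`. Summing out `Δ2`
leaves the first moments `p1 λ1 + (1 - p1)(λ1 - 1) = λ1 - (1 - p1)` of the Poisson law and
of its shift by one. Real series that converge unconditionally converge absolutely, so
products of such series may be summed over `ℤ × ℤ`, with no sign conditions. -/

theorem HasSum.mul_real {α β : Type*} {f : α → ℝ} {g : β → ℝ} {a b : ℝ}
    (hf : HasSum f a) (hg : HasSum g b) :
    HasSum (fun x : α × β => f x.1 * g x.2) (a * b) :=
  hf.mul hg <| summable_mul_of_summable_norm (summable_norm_iff.mpr hf.summable)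
    (summable_norm_iff.mpr hg.summable)

theorem HasSum.comp_add_right {G α : Type*} [AddGroup G] [AddCommMonoid α] [TopologicalSpace α]
    {f : G → α} {a : α} (hf : HasSum f a) (k : G) :
    HasSum (fun x => f (x + k)) a :=
  (Equiv.addRight k).hasSum_iff.mpr hf

theorem hasSum_int_of_nat {α : Type*} [AddCommMonoid α] [TopologicalSpace α] {f : ℤ → α}
    {a : α} (hneg : ∀ x < 0, f x = 0) (hf : HasSum (fun n : ℕ => f n) a) : HasSum f a :=
  (Nat.cast_injective.hasSum_iff fun x hx =>
    hneg x (not_le.mp fun h => hx ⟨x.toNat, Int.toNat_of_nonneg h⟩)).mp hf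

section Arrivals

variable (lam : ℝ) (b : ℕ)

theorem arr_natCast (n : ℕ) :
    arr lam b n = Real.exp (-(lam * b)) * (lam * b) ^ n / n ! := by
  simp [arr]

theorem arr_of_neg {x : ℤ} (hx : x < 0) : arr lam b x = 0 := by
  simp [arr, not_le.mpr hx]

theorem hasSum_arr_natCast : HasSum (fun n : ℕ => arr lam b n) 1 := by
  have h := (NormedSpace.expSeries_div_hasSum_exp (lam * b)).mul_left (Real.exp (-(lam * b)))
  rw [← Real.exp_eq_exp_ℝ, ← Real.exp_add, neg_add_cancel, Real.exp_zero] at h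
  simpa only [arr_natCast, mul_div_assoc] using h

theorem hasSum_arr : HasSum (arr lam b) 1 :=
  hasSum_int_of_nat (fun _ hx => arr_of_neg lam b hx) (hasSum_arr_natCast lam b)

theorem hasSum_mul_arr : HasSum (fun x : ℤ => (x : ℝ) * arr lam b x) (lam * b) := by
  refine hasSum_int_of_nat (fun x hx => by rw [arr_of_neg lam b hx, mul_zero]) ?_
  -- the first moment is the total mass, shifted by one index
  have hsucc : (fun n : ℕ => ((n + 1 : ℕ) : ℝ) * arr lam b (n + 1 : ℕ)) =
      fun n : ℕ => lam * b * arr lam b n := by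
    ext n
    rw [arr_natCast, arr_natCast, Nat.factorial_succ]
    push_cast
    field_simp
    ring
  have h := (hasSum_arr_natCast lam b).mul_left (lam * b)
  rw [mul_one, ← hsucc] at h
  simpa using (hasSum_nat_add_iff (f := fun n : ℕ => (n : ℝ) * arr lam b n) 1).mp h

theorem hasSum_mul_arr_add_one :
    HasSum (fun x : ℤ => (x : ℝ) * arr lam b (x + 1)) (lam * b - 1) := by
  have h := ((hasSum_mul_arr lam b).comp_add_right 1).sub ((hasSum_arr lam b).comp_add_right 1)
  have hx (x : ℤ) : (x : ℝ) * arr lam b (x + 1) =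
      ((x + 1 : ℤ) : ℝ) * arr lam b (x + 1) - arr lam b (x + 1) := by
    push_cast
    ring
  simpa only [hx] using h

end Arrivals

theorem d0_add_d1 (i : ℕ) (p : ℝ) : d0 i p + d1 i p = 1 := by
  unfold d0 d1
  split_ifs <;> ring

theorem d1_of_ne_zero {i : ℕ} (hi : i ≠ 0) (p : ℝ) : d1 i p = 1 - p := if_neg hi

/-- Law of the one-slot change of a queue holding `i` packets. -/
noncomputable def queueStep (i : ℕ) (p lam : ℝ) (x : ℤ) : ℝ :=
  d0 i p * arr lam 1 x + d1 i p * arr lam 1 (x + 1)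

theorem hasSum_queueStep (i : ℕ) (p lam : ℝ) : HasSum (queueStep i p lam) 1 := by
  have h := ((hasSum_arr lam 1).mul_left (d0 i p)).add
    (((hasSum_arr lam 1).comp_add_right 1).mul_left (d1 i p))
  rwa [mul_one, mul_one, d0_add_d1] at h

theorem Ptrans_eq (p1 p2 lam1 lam2 : ℝ) (i1 i2 : ℕ) (Δ : ℤ × ℤ) :
    Ptrans p1 p2 lam1 lam2 i1 i2 Δ =
      d0 i1 p1 * arr lam1 1 Δ.1 * queueStep i2 p2 lam2 Δ.2 +
        d1 i1 p1 * arr lam1 1 (Δ.1 + 1) * queueStep i2 p2 lam2 (Δ.2 - 1) := by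
  simp only [Ptrans, queueStep, sub_add_cancel]

theorem hasSum_fst_mul_Ptrans (p1 p2 lam1 lam2 : ℝ) (i1 i2 : ℕ) :
    HasSum (fun Δ : ℤ × ℤ => (Δ.1 : ℝ) * Ptrans p1 p2 lam1 lam2 i1 i2 Δ)
      (lam1 - d1 i1 p1) := by
  have hstay := ((hasSum_mul_arr lam1 1).mul_left (d0 i1 p1)).mul_real
    (hasSum_queueStep i2 p2 lam2)
  have hserve := ((hasSum_mul_arr_add_one lam1 1).mul_left (d1 i1 p1)).mul_real
    ((hasSum_queueStep i2 p2 lam2).comp_add_right (-1))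
  convert hstay.add hserve using 1
  · ext Δ
    rw [Ptrans_eq, ← sub_eq_add_neg]
    ring
  · rw [eq_sub_of_add_eq (d0_add_d1 i1 p1)]
    push_cast
    ring

theorem first_queue_drift_general (p1 p2 lam1 lam2 : ℝ)
    (i1 i2 : ℕ) (hi1 : 1 ≤ i1) :
    HasSum (fun Δ : ℤ × ℤ => (Δ.1 : ℝ) * Ptrans p1 p2 lam1 lam2 i1 i2 Δ)
      (lam1 - (1 - p1)) := by
  simpa only [d1_of_ne_zero (Nat.one_le_iff_ne_zero.mp hi1)] using
    hasSum_fst_mul_Ptrans p1 p2 lam1 lam2 i1 i2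

/-- Drift of the first queue: when `i1 ≥ 1`, the expected one-slot change of the
first queue length equals `λ1 − (1 − p1)`. -/
theorem first_queue_drift (p1 p2 lam1 lam2 : ℝ)
    (hp1 : p1 ∈ Set.Icc (0 : ℝ) 1) (hp2 : p2 ∈ Set.Icc (0 : ℝ) 1)
    (hl1 : 0 ≤ lam1) (hl2 : 0 ≤ lam2) (i1 i2 : ℕ) (hi1 : 1 ≤ i1) :
    HasSum (fun Δ : ℤ × ℤ => (Δ.1 : ℝ) * Ptrans p1 p2 lam1 lam2 i1 i2 Δ)
      (lam1 - (1 - p1)) :=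
  first_queue_drift_general p1 p2 lam1 lam2 i1 i2 hi1
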